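/- arXiv:math/0610294 — 3 statements merged into one kernel-verified Lean document; each statement's English description precedes it below -/
import Mathlib

section
/- If G is a finite p-group, then the group of automorphisms of G inducing the identity on G/Φ(G) is itself a p-group. -/
/-!
A `q`-group `P` of automorphisms acting trivially on `G ⧸ N` maps every coset `gN` to itself;
when `q ∤ |N|` it therefore fixes a point of each coset, so its fixed-point subgroup `F`
satisfies `F ⊔ N = G`. For `N = Φ(G)` this forces `F = G`, i.e. `P = 1`. In a `p`-group `Φ(G)`
is a `p`-group, so by Cauchy no prime `q ≠ p` divides `|Aut_f(G)|`.
-/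

open Pointwise

namespace MulAut

variable {G : Type*} [Group G]

/-- `fixingQuotient (frattini G)` is `Aut_f(G)`. -/
def fixingQuotient (N : Subgroup G) : Subgroup (MulAut G) where
  carrier := {ψ | ∀ g, g⁻¹ * ψ g ∈ N}
  one_mem' g := by simp [N.one_mem]
  mul_mem' {a b} ha hb g := by
    simpa [mul_assoc] using N.mul_mem (hb g) (ha (b g))
  inv_mem' {a} ha g := by
    simpa using N.inv_mem (ha (a⁻¹ g))

variable {N : Subgroup G}

theorem apply_mem_leftCoset {ψ : MulAut G} (hψ : ψ ∈ fixingQuotient N) {g x : G}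
    (hx : x ∈ g • (N : Set G)) : ψ x ∈ g • (N : Set G) := by
  rw [mem_leftCoset_iff] at hx ⊢
  simpa [mul_assoc] using N.mul_mem hx (hψ x)

variable {P : Subgroup (MulAut G)}

def leftCosetSubMulAction (hP : P ≤ fixingQuotient N) (g : G) : SubMulAction P G where
  carrier := g • (N : Set G)
  smul_mem' ψ _ hx := apply_mem_leftCoset (hP ψ.2) hx

theorem exists_mem_leftCoset_mem_fixedPoints {q : ℕ} [Fact q.Prime] (hPq : IsPGroup q P)
    (hP : P ≤ fixingQuotient N) (hqN : ¬ q ∣ Nat.card N) (g : G) :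
    ∃ x ∈ g • (N : Set G), x ∈ FixedPoints.subgroup P G := by
  have hcard : Nat.card (leftCosetSubMulAction hP g) = Nat.card N := Set.natCard_smul_set g _
  obtain ⟨⟨x, hx⟩, hfix⟩ := hPq.nonempty_fixed_point_of_prime_not_dvd_card
    (leftCosetSubMulAction hP g) (hcard ▸ hqN)
  exact ⟨x, hx, fun ψ => congrArg Subtype.val (hfix ψ)⟩

theorem fixedPoints_sup_eq_top {q : ℕ} [Fact q.Prime] (hPq : IsPGroup q P)
    (hP : P ≤ fixingQuotient N) (hqN : ¬ q ∣ Nat.card N) :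
    FixedPoints.subgroup P G ⊔ N = ⊤ := by
  refine eq_top_iff.mpr fun g _ => ?_
  obtain ⟨x, hx, hxfix⟩ := exists_mem_leftCoset_mem_fixedPoints hPq hP hqN g
  have hgx : x⁻¹ * g ∈ N := by
    simpa using N.inv_mem ((mem_leftCoset_iff g).mp hx)
  simpa using Subgroup.mul_mem_sup hxfix hgx

theorem eq_bot_of_le_fixingQuotient_frattini [Finite G] {q : ℕ} [Fact q.Prime]
    (hPq : IsPGroup q P) (hP : P ≤ fixingQuotient (frattini G))
    (hqΦ : ¬ q ∣ Nat.card (frattini G)) : P = ⊥ := by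
  have hfix : FixedPoints.subgroup P G = ⊤ :=
    frattini_nongenerating (fixedPoints_sup_eq_top hPq hP hqΦ)
  refine (Subgroup.eq_bot_iff_forall P).mpr fun ψ hψ => MulEquiv.ext fun g => ?_
  exact (Subgroup.eq_top_iff' _).mp hfix g ⟨ψ, hψ⟩

theorem isPGroup_fixingQuotient_frattini [Finite G] {p : ℕ} [Fact p.Prime] (hG : IsPGroup p G) :
    IsPGroup p (fixingQuotient (frattini G)) := by
  obtain ⟨n, hn⟩ := IsPGroup.iff_card.mp (hG.to_subgroup (frattini G))
  refine IsPGroup.of_card <|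
    Nat.eq_prime_pow_of_unique_prime_dvd Nat.card_pos.ne' fun {q} hq hqA => ?_
  have : Fact q.Prime := ⟨hq⟩
  by_contra hqp
  obtain ⟨χ, hχ⟩ := exists_prime_orderOf_dvd_card' q hqA
  have hχq : IsPGroup q (Subgroup.zpowers (χ : MulAut G)) := by
    refine IsPGroup.of_card (n := 1) ?_
    rw [Nat.card_zpowers, pow_one, ← hχ, Subgroup.orderOf_coe]
  have hqΦ : ¬ q ∣ Nat.card (frattini G) := by
    rw [hn]
    exact fun h => hqp ((Nat.prime_dvd_prime_iff_eq hq Fact.out).mp (hq.dvd_of_dvd_pow h))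
  have hχ1 := eq_bot_of_le_fixingQuotient_frattini hχq (Subgroup.zpowers_le.mpr χ.2) hqΦ
  rw [Subgroup.zpowers_eq_bot, OneMemClass.coe_eq_one] at hχ1
  exact hq.one_lt.ne' (by rw [← hχ, hχ1, orderOf_one])

end MulAut

/-- If `G` is a finite `p`-group, then the automorphisms of `G` inducing the identity on
`G ⧸ Φ(G)` (i.e. `g⁻¹ * φ g ∈ frattini G` for all `g`) form a `p`-group: every such
automorphism has `p`-power order. -/
theorem frattini_automorphisms_isPGroup (p : ℕ) [Fact p.Prime] (G : Type*) [Group G] [Finite G]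
    (hG : IsPGroup p G) (φ : MulAut G) (hφ : ∀ g : G, g⁻¹ * φ g ∈ frattini G) :
    ∃ k : ℕ, φ ^ (p ^ k) = 1 := by
  obtain ⟨k, hk⟩ := MulAut.isPGroup_fixingQuotient_frattini hG ⟨φ, hφ⟩
  exact ⟨k, congrArg Subtype.val hk⟩
end

section
/- If G is an extraspecial p-group, then the subgroup H of Aut(G) consisting of automorphisms acting trivially on Z(G) is normal in Aut(G), and Aut(G)/H is cyclic of order p−1. -/
/-- A finite `p`-group is extraspecial if its center, commutator subgroup and Frattini
subgroup coincide and have order `p`. -/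
def IsExtraspecial (p : ℕ) (G : Type*) [Group G] : Prop :=
  IsPGroup p G ∧ Subgroup.center G = commutator G ∧ Subgroup.center G = frattini G ∧
    Nat.card (Subgroup.center G) = p

/-!
Restricting automorphisms to the centre `Z` gives a homomorphism `Aut G → Aut Z ≅ (ZMod p)ˣ`
whose kernel is `H`, so everything comes down to its surjectivity: for each `k` prime to `p`,
some automorphism of `G` acts on `Z` as `z ↦ z ^ k`; for `p = 2` this is vacuous. For odd `p`
we induct on `|G|` in the larger class of groups with `|Z| = p` in which commutators and `p`-th
powers are central. If `G` is abelian then `G = Z`. Otherwise there are `a, b` with `[a, b] ≠ 1`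
and `b ^ p = 1`, and `G` is the central product of `E = ⟨a, b⟩` and `C = C_G(a, b)`, which again
lies in the class. On `E = ⟨a, [a, b]⟩ ⋊ ⟨b⟩` the assignment `a ↦ a ^ k`, `b ↦ b` is an
automorphism; by induction `C` has one that is `k`-th powering on `Z`; both are `k`-th powering
on `E ∩ C ≤ Z`, so they glue.
-/

open Subgroup
open scoped commutatorElement

section Commutator

variable {G : Type*} [Group G] {x y w : G}

theorem commutatorElement_mul_right_of_mem_center (h : ⁅x, w⁆ ∈ center G) :
    ⁅x, y * w⁆ = ⁅x, y⁆ * ⁅x, w⁆ := by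
  rw [commutatorElement_mul_right_eq_mul_conj, mul_assoc ⁅x, y⁆, mem_center_iff.mp h y]
  group

theorem commutatorElement_zpow_right_of_mem_center (h : ⁅x, y⁆ ∈ center G) (n : ℤ) :
    ⁅x, y ^ n⁆ = ⁅x, y⁆ ^ n := by
  have hconj : x * y * x⁻¹ = ⁅x, y⁆ * y := by rw [commutatorElement_def]; group
  have hcomm : Commute ⁅x, y⁆ y := (mem_center_iff.mp h y).symm
  rw [commutatorElement_def, ← conj_zpow, hconj, hcomm.mul_zpow]
  group

theorem commutatorElement_pow_left_of_mem_center (h : ⁅x, y⁆ ∈ center G) (n : ℕ) :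
    ⁅x ^ n, y⁆ = ⁅x, y⁆ ^ n := by
  have h' : ⁅y, x⁆ ∈ center G := by rw [← commutatorElement_inv]; exact inv_mem h
  rw [← commutatorElement_inv, ← zpow_natCast, commutatorElement_zpow_right_of_mem_center h',
    ← commutatorElement_inv, inv_zpow', zpow_neg, inv_inv, zpow_natCast]

theorem mul_pow_of_commutatorElement_mem_center (h : ⁅y, x⁆ ∈ center G) (n : ℕ) :
    (x * y) ^ n = x ^ n * y ^ n * ⁅y, x⁆ ^ n.choose 2 := by
  have hc (m : ℕ) (g : G) : g * ⁅y, x⁆ ^ m = ⁅y, x⁆ ^ m * g := mem_center_iff.mp (pow_mem h m) g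
  have hswap (m : ℕ) : y ^ m * x = ⁅y, x⁆ ^ m * x * y ^ m := by
    rw [← commutatorElement_pow_left_of_mem_center h, commutatorElement_def]; group
  generalize ⁅y, x⁆ = c at hc hswap ⊢
  induction n with
  | zero => simp
  | succ n ih =>
    calc (x * y) ^ (n + 1) = x ^ n * (y ^ n * x) * y * c ^ n.choose 2 := by
          rw [pow_succ, ih, mul_assoc _ (c ^ _), ← hc]; group
      _ = c ^ n * (x ^ n * x * y ^ n * y) * c ^ n.choose 2 := by
          rw [hswap]; simp only [← mul_assoc]; rw [hc n (x ^ n)]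
      _ = x ^ (n + 1) * y ^ (n + 1) * c ^ (n + 1).choose 2 := by
          rw [← hc n, Nat.choose_succ_succ', Nat.choose_one_right, pow_add, pow_succ, pow_succ]
          group

end Commutator

namespace IsPGroup

variable {p : ℕ} [Fact p.Prime] {G : Type*} [Group G] [Finite G]

theorem pow_mem_of_isCoatom (hG : IsPGroup p G) {K : Subgroup G} (hK : IsCoatom K) (x : G) :
    x ^ p ∈ K := by
  have := hG.isNilpotent
  have : K.Normal := Group.normalizerCondition_of_isNilpotent.normal_of_coatom K hK
  obtain ⟨n, hn⟩ := (hG.to_subgroup K).exists_card_eq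
  obtain ⟨m, hm⟩ := hG.exists_card_eq
  have hlt : n < m := by
    have hne : Nat.card K ≠ Nat.card G := fun h => hK.1 (K.eq_top_of_card_eq h)
    have hle : Nat.card K ≤ Nat.card G := Nat.card_le_card_of_injective _ K.subtype_injective
    rw [hn, hm] at hne hle
    exact (Nat.pow_lt_pow_iff_right (Fact.out : p.Prime).one_lt).mp (hle.lt_of_ne hne)
  obtain ⟨L, hL, hKL⟩ := Sylow.exists_subgroup_card_pow_succ
    (hm ▸ pow_dvd_pow p hlt : p ^ (n + 1) ∣ Nat.card G) hn
  have hLtop : L = ⊤ := hK.2 L (hKL.lt_of_ne (by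
    rintro rfl
    have := Nat.pow_right_injective (Fact.out : p.Prime).two_le (hn.symm.trans hL)
    omega))
  have hindex : K.index = p := by
    have := K.card_mul_index
    rw [hn, ← card_top (G := G), ← hLtop, hL, pow_succ] at this
    exact Nat.eq_of_mul_eq_mul_left (pow_pos (Fact.out : p.Prime).pos n) this
  simpa [hindex] using K.pow_index_mem x

theorem pow_mem_frattini (hG : IsPGroup p G) (x : G) : x ^ p ∈ frattini G := by
  simp only [frattini, Order.radical, mem_iInf]
  exact fun K hK => hG.pow_mem_of_isCoatom hK x

end IsPGroup

section Extension

variable {G : Type*} [Group G]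

theorem exists_mulAut_comp_eq_of_ker_le [Finite G] {X : Type*} [Group X] {π ψ : X →* G}
    (hπ : Function.Surjective π) (hψ : Function.Surjective ψ) (hker : π.ker ≤ ψ.ker) :
    ∃ φ : MulAut G, ∀ x, φ (π x) = ψ x := by
  set Φ := π.liftOfSurjective hπ ⟨ψ, hker⟩
  have hΦ : ∀ x, Φ (π x) = ψ x := π.liftOfRightInverse_comp_apply _ _ _
  have hsurj : Function.Surjective Φ := fun g =>
    let ⟨x, hx⟩ := hψ g
    ⟨π x, (hΦ x).trans hx⟩
  exact ⟨MulEquiv.ofBijective Φ ⟨Finite.injective_iff_surjective.mpr hsurj, hsurj⟩, hΦ⟩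

theorem exists_mulAut_of_commute_of_forall_mul_eq [Finite G] {M N : Subgroup G}
    (hcomm : ∀ m ∈ M, ∀ n ∈ N, Commute m n) (hMN : ∀ g, ∃ m ∈ M, ∃ n ∈ N, m * n = g)
    (f : MulAut M) (g : MulAut N) (hfg : ∀ (m : M) (n : N), (m : G) = n → (f m : G) = g n) :
    ∃ φ : MulAut G, (∀ m : M, φ m = f m) ∧ ∀ n : N, φ n = g n := by
  let π := M.subtype.noncommCoprod N.subtype fun m n => hcomm m m.2 n n.2
  let ψ := (M.subtype.comp f.toMonoidHom).noncommCoprod (N.subtype.comp g.toMonoidHom)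
    fun m n => hcomm _ (f m).2 _ (g n).2
  have hπ : Function.Surjective π := fun x => by
    obtain ⟨m, hm, n, hn, rfl⟩ := hMN x
    exact ⟨(⟨m, hm⟩, ⟨n, hn⟩), rfl⟩
  have hψ : Function.Surjective ψ := fun x => by
    obtain ⟨m, hm, n, hn, rfl⟩ := hMN x
    exact ⟨(f.symm ⟨m, hm⟩, g.symm ⟨n, hn⟩), by simp [ψ]⟩
  have hker : π.ker ≤ ψ.ker := by
    rintro ⟨m, n⟩ h
    have hmn : (m : G) = (n⁻¹ : N) := eq_inv_of_mul_eq_one_left h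
    simp [ψ, hfg m n⁻¹ hmn]
  obtain ⟨φ, hφ⟩ := exists_mulAut_comp_eq_of_ker_le hπ hψ hker
  refine ⟨φ, fun m => ?_, fun n => ?_⟩
  · simpa [show π (m, 1) = m from mul_one (m : G), ψ] using hφ (m, 1)
  · simpa [show π (1, n) = n from one_mul (n : G), ψ] using hφ (1, n)

theorem exists_mulAut_of_disjoint_of_sup_eq_top {N K : Subgroup G} [N.Normal]
    (hdisj : Disjoint N K) (hsup : N ⊔ K = ⊤) (f : MulAut N)
    (hf : ∀ k ∈ K, ∀ n n' : N, (n' : G) = k * n * k⁻¹ → (f n' : G) = k * f n * k⁻¹) :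
    ∃ φ : MulAut G, (∀ n : N, φ n = f n) ∧ ∀ k ∈ K, φ k = k := by
  have hc : N.IsComplement' K :=
    isComplement'_of_disjoint_and_mul_eq_univ hdisj (by rw [← normal_mul, hsup]; rfl)
  let e := SemidirectProduct.mulEquivSubgroup hc
  let φ := (e.symm.trans (SemidirectProduct.congr f (MulEquiv.refl K) fun k => by
    ext n; simpa using hf k k.2 n _ rfl)).trans e
  refine ⟨φ, fun n => ?_, fun k hk => ?_⟩
  · have : e.symm n = SemidirectProduct.inl n := e.symm_apply_eq.mpr (by simp [e])
    simp [φ, this, e]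
  · have : e.symm k = SemidirectProduct.inr ⟨k, hk⟩ := e.symm_apply_eq.mpr (by simp [e])
    simp [φ, this, e]

end Extension

section CentralProduct

variable {G : Type*} [Group G] {M N : Subgroup G}

theorem mem_center_of_commute_of_mem_of_mem (hcomm : ∀ m ∈ M, ∀ n ∈ N, Commute m n)
    (hMN : ∀ g, ∃ m ∈ M, ∃ n ∈ N, m * n = g) {x : G} (hxM : x ∈ M) (hxN : x ∈ N) :
    x ∈ center G := by
  refine mem_center_iff.mpr fun g => ?_
  obtain ⟨m, hm, n, hn, rfl⟩ := hMN g
  exact ((hcomm m hm x hxN).mul_left (hcomm x hxM n hn).symm).eq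

theorem mem_center_subgroup_iff_of_commute (hcomm : ∀ m ∈ M, ∀ n ∈ N, Commute m n)
    (hMN : ∀ g, ∃ m ∈ M, ∃ n ∈ N, m * n = g) {x : M} : x ∈ center M ↔ (x : G) ∈ center G := by
  refine ⟨fun hx => mem_center_iff.mpr fun g => ?_,
    fun hx => mem_center_iff.mpr fun m => Subtype.ext (mem_center_iff.mp hx m)⟩
  obtain ⟨m, hm, n, hn, rfl⟩ := hMN g
  have hmx : m * x = x * m := congr_arg Subtype.val (mem_center_iff.mp hx ⟨m, hm⟩)
  exact (Commute.mul_left hmx (hcomm x x.2 n hn).symm).eq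

theorem card_center_eq_of_mem_center_iff (hle : center G ≤ M)
    (hM : ∀ x : M, x ∈ center M ↔ (x : G) ∈ center G) :
    Nat.card (center M) = Nat.card (center G) := by
  rw [← Nat.card_congr (subgroupOfEquivOfLe hle).toEquiv]
  congr
  ext x
  exact hM x

end CentralProduct

theorem pow_eq_one_of_mem_center {p : ℕ} {G : Type*} [Group G] (hZ : Nat.card (center G) = p)
    {z : G} (hz : z ∈ center G) : z ^ p = 1 :=
  orderOf_dvd_iff_pow_eq_one.mp (hZ ▸ (center G).orderOf_dvd_natCard hz)

theorem mem_zpowers_of_mem_center {p : ℕ} [Fact p.Prime] {G : Type*} [Group G]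
    (hZ : Nat.card (center G) = p) {z w : G} (hz : z ∈ center G) (hz1 : z ≠ 1)
    (hw : w ∈ center G) : w ∈ zpowers z := by
  obtain ⟨j, hj⟩ := mem_zpowers_iff.mp <|
    mem_zpowers_of_prime_card hZ (g := ⟨z, hz⟩) (g' := ⟨w, hw⟩) (by simpa using hz1)
  exact mem_zpowers_iff.mpr ⟨j, congr_arg Subtype.val hj⟩

theorem exists_mulAut_pow_of_isMulCommutative {G : Type*} [Group G] [IsMulCommutative G] {k : ℕ}
    (hk : (Nat.card G).Coprime k) : ∃ φ : MulAut G, ∀ x, φ x = x ^ k :=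
  ⟨{ powCoprime hk with map_mul' := fun x y => (show Commute x y from mul_comm' x y).mul_pow k },
    fun _ => rfl⟩

theorem exists_mulAut_of_closure_pair_eq_top {p : ℕ} [Fact p.Prime] {E : Type*} [Group E]
    [Finite E] (hE : IsPGroup p E) {a b : E} (htop : closure {a, b} = ⊤)
    (hcomm : ∀ x y : E, ⁅x, y⁆ ∈ zpowers ⁅a, b⁆) (hz : ⁅a, b⁆ ∈ center E) (hz1 : ⁅a, b⁆ ≠ 1)
    (hb : b ^ p = 1) {k : ℕ} (hk : k.Coprime p) : ∃ φ : MulAut E, φ a = a ^ k ∧ φ b = b := by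
  set A := closure {a, ⁅a, b⁆}
  have haA : a ∈ A := subset_closure (by simp)
  have hzA : ⁅a, b⁆ ∈ A := subset_closure (by simp)
  have : IsMulCommutative A := isMulCommutative_closure <| by
    simp only [Set.mem_insert_iff, Set.mem_singleton_iff]
    rintro x (rfl | rfl) y (rfl | rfl) <;> simp [mem_center_iff.mp hz]
  have : A.Normal := ⟨fun x hx g => by
    rw [show g * x * g⁻¹ = ⁅g, x⁆ * x by rw [commutatorElement_def]; group]
    exact mul_mem (zpowers_le.mpr hzA (hcomm g x)) hx⟩
  have hdisj : Disjoint A (zpowers b) := by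
    rw [disjoint_iff_inf_le]
    rintro x ⟨hxA, hxb⟩
    obtain ⟨j, rfl⟩ := mem_zpowers_iff.mp hxb
    have hzp : ⁅a, b⁆ ^ p = 1 := by
      rw [← zpow_natCast, ← commutatorElement_zpow_right_of_mem_center hz, zpow_natCast, hb,
        commutatorElement_one_right]
    have hzj : ⁅a, b⁆ ^ j = 1 := by
      rw [← commutatorElement_zpow_right_of_mem_center hz, commutatorElement_eq_one_iff_commute]
      exact congr_arg Subtype.val (mul_comm' (⟨a, haA⟩ : A) ⟨_, hxA⟩)
    rw [← orderOf_dvd_iff_zpow_eq_one, orderOf_eq_prime hzp hz1] at hzj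
    exact (orderOf_dvd_iff_zpow_eq_one.mp ((Int.natCast_dvd_natCast.mpr
      (orderOf_dvd_of_pow_eq_one hb)).trans hzj))
  have hsup : A ⊔ zpowers b = ⊤ := by
    rw [eq_top_iff, ← htop, closure_le, Set.insert_subset_iff, Set.singleton_subset_iff]
    exact ⟨mem_sup_left haA, mem_sup_right (mem_zpowers b)⟩
  obtain ⟨n, hn⟩ := (hE.to_subgroup A).exists_card_eq
  obtain ⟨α, hα⟩ := exists_mulAut_pow_of_isMulCommutative (hn ▸ hk.symm.pow_left n)
  obtain ⟨φ, hφA, hφb⟩ := exists_mulAut_of_disjoint_of_sup_eq_top hdisj hsup α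
    fun g _ x x' hx' => by simp [hα, hx', conj_pow]
  exact ⟨φ, by simpa [hα] using hφA ⟨a, haA⟩, hφb b (mem_zpowers b)⟩

structure ElementaryModCenter (p : ℕ) (G : Type*) [Group G] : Prop where
  commutatorElement_mem_center (x y : G) : ⁅x, y⁆ ∈ center G
  pow_mem_center (x : G) : x ^ p ∈ center G

namespace ElementaryModCenter

variable {p : ℕ} {G : Type*} [Group G]

theorem isPGroup (hG : ElementaryModCenter p G) (hZ : Nat.card (center G) = p) :
    IsPGroup p G := fun x =>
  ⟨2, by rw [pow_two, pow_mul, pow_eq_one_of_mem_center hZ (hG.pow_mem_center x)]⟩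

theorem to_subgroup (hG : ElementaryModCenter p G) {M : Subgroup G}
    (hM : ∀ x : M, x ∈ center M ↔ (x : G) ∈ center G) : ElementaryModCenter p M where
  commutatorElement_mem_center x y := (hM _).mpr (hG.commutatorElement_mem_center x y)
  pow_mem_center x := (hM _).mpr (by simpa using hG.pow_mem_center x)

theorem exists_commutatorElement_ne_one_pow_eq_one [Fact p.Prime] (hG : ElementaryModCenter p G)
    (hZ : Nat.card (center G) = p) (hp : p ≠ 2) {a₀ b₀ : G} (hab : ⁅a₀, b₀⁆ ≠ 1) :
    ∃ a b : G, ⁅a, b⁆ ≠ 1 ∧ b ^ p = 1 := by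
  by_cases ha : a₀ ^ p = 1
  · exact ⟨b₀, a₀, by rwa [← commutatorElement_inv, inv_ne_one], ha⟩
  have hz := hG.commutatorElement_mem_center a₀ b₀
  obtain ⟨t, ht⟩ := mem_zpowers_iff.mp (mem_zpowers_of_mem_center hZ hz hab (hG.pow_mem_center a₀))
  obtain ⟨s, hs⟩ := mem_zpowers_iff.mp (mem_zpowers_of_mem_center hZ hz hab (hG.pow_mem_center b₀))
  have hpow (x : G) (n : ℤ) : (x ^ n) ^ p = (x ^ p) ^ n := by
    rw [← zpow_natCast, ← zpow_natCast, ← zpow_mul, ← zpow_mul, mul_comm]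
  -- With `z = ⁅a₀, b₀⁆`, `a₀ ^ p = z ^ t` and `b₀ ^ p = z ^ s`, the `p`-th power of the witness is
  -- `z ^ (t * s) * z ^ (-(s * t)) = 1`, because `(x * y) ^ p = x ^ p * y ^ p` for odd `p`.
  refine ⟨a₀, a₀ ^ s * b₀ ^ (-t), ?_, ?_⟩
  · rw [commutatorElement_mul_right_of_mem_center (hG.commutatorElement_mem_center _ _),
      commutatorElement_eq_one_iff_commute.mpr ((Commute.refl a₀).zpow_right s), one_mul,
      commutatorElement_zpow_right_of_mem_center hz, zpow_neg, inv_ne_one, ht]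
    exact ha
  · obtain ⟨m, hm⟩ : p ∣ p.choose 2 :=
      (Fact.out : p.Prime).dvd_choose_self two_ne_zero ((Fact.out : p.Prime).two_le.lt_of_ne' hp)
    rw [mul_pow_of_commutatorElement_mem_center (hG.commutatorElement_mem_center _ _), hm, pow_mul,
      pow_eq_one_of_mem_center hZ (hG.commutatorElement_mem_center _ _), one_pow, mul_one,
      hpow, hpow, ← ht, ← hs, ← zpow_mul, ← zpow_mul, ← zpow_add]
    simp [mul_comm]

theorem exists_mem_centralizer_mul_mem_closure [Fact p.Prime] (hG : ElementaryModCenter p G)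
    (hZ : Nat.card (center G) = p) {a b : G} (hab : ⁅a, b⁆ ≠ 1) (g : G) :
    ∃ c ∈ centralizer {a, b}, ∃ e ∈ closure {a, b}, c * e = g := by
  have hcomm := hG.commutatorElement_mem_center
  obtain ⟨i, hi⟩ := mem_zpowers_iff.mp (mem_zpowers_of_mem_center hZ (hcomm a b) hab (hcomm a g))
  obtain ⟨j, hj⟩ := mem_zpowers_iff.mp (mem_zpowers_of_mem_center hZ (hcomm a b) hab (hcomm b g))
  set e := a ^ (-j) * b ^ i
  have hae : ⁅a, e⁆ = ⁅a, g⁆ := by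
    rw [commutatorElement_mul_right_of_mem_center (hcomm _ _),
      commutatorElement_eq_one_iff_commute.mpr ((Commute.refl a).zpow_right _), one_mul,
      commutatorElement_zpow_right_of_mem_center (hcomm a b), hi]
  have hbe : ⁅b, e⁆ = ⁅b, g⁆ := by
    rw [commutatorElement_mul_right_of_mem_center (hcomm _ _),
      commutatorElement_zpow_right_of_mem_center (hcomm b a), ← commutatorElement_inv,
      commutatorElement_eq_one_iff_commute.mpr ((Commute.refl b).zpow_right _), mul_one,
      inv_zpow', neg_neg, hj]
  have hcentral (h : G) (hh : ⁅h, e⁆ = ⁅h, g⁆) : h * (g * e⁻¹) = g * e⁻¹ * h := by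
    rw [← commutatorElement_eq_one_iff_mul_comm,
      commutatorElement_mul_right_of_mem_center (hcomm _ _),
      ← zpow_neg_one, commutatorElement_zpow_right_of_mem_center (hcomm _ _), zpow_neg_one, hh,
      mul_inv_cancel]
  refine ⟨g * e⁻¹, mem_centralizer_iff.mpr ?_, e, mul_mem (zpow_mem (subset_closure (by simp)) _)
    (zpow_mem (subset_closure (by simp)) _), inv_mul_cancel_right g e⟩
  rintro h (rfl | rfl)
  exacts [hcentral h hae, hcentral h hbe]

theorem exists_mulAut_closure_pair [Fact p.Prime] [Finite G] (hG : ElementaryModCenter p G)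
    (hZ : Nat.card (center G) = p) {a b : G} (hab : ⁅a, b⁆ ≠ 1) (hb : b ^ p = 1) {k : ℕ}
    (hk : k.Coprime p) :
    ∃ φ : MulAut (closure {a, b}), ∀ x : closure {a, b}, (x : G) ∈ center G → φ x = x ^ k := by
  set E := closure {a, b}
  set a' : E := ⟨a, subset_closure (by simp)⟩
  set b' : E := ⟨b, subset_closure (by simp)⟩
  have hz : ⁅a', b'⁆ ∈ center E := mem_center_iff.mpr fun g =>
    Subtype.ext (mem_center_iff.mp (hG.commutatorElement_mem_center a b) g)
  have hzpowers (x : E) (hx : (x : G) ∈ center G) : x ∈ zpowers ⁅a', b'⁆ := by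
    obtain ⟨j, hj⟩ := mem_zpowers_iff.mp
      (mem_zpowers_of_mem_center hZ (hG.commutatorElement_mem_center a b) hab hx)
    exact mem_zpowers_iff.mpr ⟨j, Subtype.ext hj⟩
  have htop : closure {a', b'} = ⊤ := by
    rw [← closure_closure_coe_preimage (k := {a, b})]
    congr
    ext x
    simp [a', b', Subtype.ext_iff]
  obtain ⟨φ, hφa, hφb⟩ := exists_mulAut_of_closure_pair_eq_top ((hG.isPGroup hZ).to_subgroup E)
    htop (fun x y => hzpowers _ (hG.commutatorElement_mem_center x y)) hz
    (fun h => hab (congr_arg Subtype.val h)) (Subtype.ext hb) hk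
  refine ⟨φ, fun x hx => ?_⟩
  obtain ⟨j, rfl⟩ := mem_zpowers_iff.mp (hzpowers x hx)
  rw [map_zpow, map_commutatorElement, hφa, hφb, commutatorElement_pow_left_of_mem_center hz,
    ← zpow_natCast, ← zpow_natCast, ← zpow_mul, ← zpow_mul, mul_comm]

theorem exists_mulAut_pow_of_mem_center [Fact p.Prime] [Finite G] (hp : p ≠ 2)
    (hG : ElementaryModCenter p G) (hZ : Nat.card (center G) = p) {k : ℕ} (hk : k.Coprime p) :
    ∃ φ : MulAut G, ∀ z ∈ center G, φ z = z ^ k := by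
  induction hn : Nat.card G using Nat.strong_induction_on generalizing G with
  | _ n ih =>
  by_cases hcomm : ∀ x y : G, Commute x y
  · have : IsMulCommutative G := .of_comm hcomm
    have hcenter : center G = ⊤ := eq_top_iff.mpr fun x _ => mem_center_iff.mpr (hcomm · x)
    obtain ⟨φ, hφ⟩ := exists_mulAut_pow_of_isMulCommutative (k := k)
      (by rwa [← card_top (G := G), ← hcenter, hZ, Nat.coprime_comm])
    exact ⟨φ, fun z _ => hφ z⟩
  obtain ⟨a₀, b₀, hab₀⟩ : ∃ a₀ b₀ : G, ¬Commute a₀ b₀ := by simpa using hcomm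
  obtain ⟨a, b, hab, hb⟩ := hG.exists_commutatorElement_ne_one_pow_eq_one hZ hp
    (mt commutatorElement_eq_one_iff_commute.mp hab₀)
  set C := centralizer {a, b}
  have hCE : ∀ c ∈ C, ∀ e ∈ closure {a, b}, Commute c e := fun c hc e he =>
    (mem_centralizer_iff.mp ((centralizer_closure {a, b}).symm ▸ hc) e he).symm
  have hdec := hG.exists_mem_centralizer_mul_mem_closure hZ hab
  have hcenterC (x : C) : x ∈ center C ↔ (x : G) ∈ center G :=
    mem_center_subgroup_iff_of_commute hCE hdec
  have hbC : b ∉ C := fun h => hab (commutatorElement_eq_one_iff_commute.mpr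
    (mem_centralizer_iff.mp h a (by simp)))
  obtain ⟨φC, hφC⟩ := ih _ (hn ▸ Finite.card_subtype_lt hbC) (hG.to_subgroup hcenterC)
    (hZ ▸ card_center_eq_of_mem_center_iff (center_le_centralizer _) hcenterC) rfl
  obtain ⟨φE, hφE⟩ := hG.exists_mulAut_closure_pair hZ hab hb hk
  obtain ⟨φ, hφ, -⟩ := exists_mulAut_of_commute_of_forall_mul_eq hCE hdec φC φE fun c e hce => by
    have hc : (c : G) ∈ center G := mem_center_of_commute_of_mem_of_mem hCE hdec c.2 (hce ▸ e.2)
    rw [hφC c ((hcenterC c).mpr hc), hφE e (hce ▸ hc)]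
    simp [hce]
  refine ⟨φ, fun z hz => ?_⟩
  have hzC : (⟨z, center_le_centralizer _ hz⟩ : C) ∈ center C := (hcenterC _).mpr hz
  simpa [hφC _ hzC] using hφ ⟨z, center_le_centralizer _ hz⟩

end ElementaryModCenter

theorem MulAut.exists_pow_of_card_eq_prime {p : ℕ} [Fact p.Prime] {Z : Type*} [Group Z]
    (hZ : Nat.card Z = p) (ψ : MulAut Z) : ∃ k : ℕ, k.Coprime p ∧ ∀ z, ψ z = z ^ k := by
  have : Finite Z := Nat.finite_of_card_ne_zero (hZ ▸ (Fact.out : p.Prime).ne_zero)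
  have : IsCyclic Z := isCyclic_of_prime_card hZ
  have : Nontrivial Z := Finite.one_lt_card_iff_nontrivial.mp (hZ ▸ (Fact.out : p.Prime).one_lt)
  obtain ⟨m, hm⟩ := ψ.toMonoidHom.map_cyclic
  have hψ (z : Z) : ψ z = z ^ (m % p).toNat := by
    have hnonneg : 0 ≤ m % p := Int.emod_nonneg m (by exact_mod_cast (Fact.out : p.Prime).ne_zero)
    rw [← zpow_natCast, Int.toNat_of_nonneg hnonneg, ← hZ, zpow_mod_natCard]
    exact hm z
  refine ⟨_, ((Fact.out : p.Prime).coprime_iff_not_dvd.mpr fun ⟨d, hd⟩ => ?_).symm, hψ⟩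
  obtain ⟨z, hz⟩ := exists_ne (1 : Z)
  apply hz (ψ.injective _)
  rw [hψ, hd, pow_mul, ← hZ, pow_card_eq_one', one_pow, map_one]

theorem MulAut.isCyclic_of_card_eq_prime {p : ℕ} [Fact p.Prime] {Z : Type*} [Group Z]
    (hZ : Nat.card Z = p) : IsCyclic (MulAut Z) := by
  have : IsCyclic Z := isCyclic_of_prime_card hZ
  subst hZ
  exact isCyclic_of_surjective (IsCyclic.mulAutMulEquiv Z).symm.toMonoidHom (MulEquiv.surjective _)

theorem IsExtraspecial.elementaryModCenter {p : ℕ} [Fact p.Prime] {G : Type*} [Group G]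
    [Finite G] (hG : IsExtraspecial p G) : ElementaryModCenter p G where
  commutatorElement_mem_center x y :=
    hG.2.1 ▸ commutator_mem_commutator (mem_top x) (mem_top y)
  pow_mem_center x := hG.2.2.1 ▸ hG.1.pow_mem_frattini x

theorem IsExtraspecial.surjective_mulAutCharacteristic_center {p : ℕ} [Fact p.Prime]
    {G : Type*} [Group G] [Finite G] (hG : IsExtraspecial p G) :
    Function.Surjective (MulAut.characteristic (center G)) := by
  have hZ := hG.2.2.2
  intro ψ
  by_cases hp : p = 2
  · have : IsCyclic (center G) := isCyclic_of_prime_card hZ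
    have : Subsingleton (MulAut (center G)) :=
      (Nat.card_eq_one_iff_unique.mp (by rw [IsCyclic.card_mulAut, hZ, hp]; rfl)).1
    exact ⟨1, Subsingleton.elim _ _⟩
  obtain ⟨k, hk, hψ⟩ := MulAut.exists_pow_of_card_eq_prime hZ ψ
  obtain ⟨φ, hφ⟩ := hG.elementaryModCenter.exists_mulAut_pow_of_mem_center hp hZ hk
  exact ⟨φ, MulEquiv.ext fun z => Subtype.ext (by simp [hφ z z.2, hψ])⟩

/-- For an extraspecial `p`-group `G`, the automorphisms acting trivially on the center form
a normal subgroup `H` of `Aut G`, and `Aut G ⧸ H` is cyclic of order `p - 1`. -/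
theorem aut_mod_central_action (p : ℕ) [Fact p.Prime] (G : Type*) [Group G] [Finite G]
    (hG : IsExtraspecial p G) :
    ∃ H : Subgroup (MulAut G),
      (∀ φ : MulAut G, φ ∈ H ↔ ∀ z ∈ Subgroup.center G, φ z = z) ∧
      H.Normal ∧
      ∃ _ : H.Normal, IsCyclic (MulAut G ⧸ H) ∧ Nat.card (MulAut G ⧸ H) = p - 1 := by
  set res := MulAut.characteristic (center G)
  have hZ := hG.2.2.2
  have : IsCyclic (center G) := isCyclic_of_prime_card hZ
  have : IsCyclic (MulAut (center G)) := MulAut.isCyclic_of_card_eq_prime hZ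
  let e := QuotientGroup.quotientKerEquivOfSurjective res hG.surjective_mulAutCharacteristic_center
  refine ⟨res.ker, fun φ => ?_, inferInstance, inferInstance, ?_, ?_⟩
  · simp [res, MulEquiv.ext_iff, Subtype.ext_iff]
  · exact isCyclic_of_surjective e.symm.toMonoidHom e.symm.surjective
  · rw [Nat.card_congr e.toEquiv, IsCyclic.card_mulAut, hZ, Nat.totient_prime Fact.out]
end

section
/- For n ≥ 3, the group G = ⟨a, b : a^(2^(n−1)) = b^2 = 1, a^b = a^(1+2^(n−2))⟩ (the modular group of order 2^n) satisfies |Aut(G)| = |G| = 2^n. -/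
/-!
The normal form `a ^ i * b ^ s` (`i : ZMod (2 ^ (n - 1))`, `s : ZMod 2`) is a bijection onto `G`
by counting, so `G` is presented by its three relations and its automorphisms correspond to the
pairs `(x, y)` that satisfy the relations and generate `G`. Since `a ^ 2` is central, every
maximal subgroup is abelian, so a pair generates `G` exactly when it does not commute. Counting
such pairs in normal-form coordinates: for `n ≥ 4` they are `x = a ^ i * b ^ s` with `i` odd and
`y = a ^ j * b` with `2 * j = 0`, giving `2 ^ (n - 2) * 2 * 2` pairs; for `n = 3` (the dihedral
group of order 8) they are enumerated.
-/

open Subgroup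

theorem closure_mul_pair_eq {G : Type*} [Group G] (x y : G) :
    closure {x * y, y} = closure {x, y} := by
  apply le_antisymm <;> rw [closure_le, Set.insert_subset_iff, Set.singleton_subset_iff]
  · exact ⟨mul_mem (subset_closure (by simp)) (subset_closure (by simp)),
      subset_closure (by simp)⟩
  · refine ⟨?_, subset_closure (by simp)⟩
    simpa using mul_mem (subset_closure (by simp) : x * y ∈ closure {x * y, y})
      (inv_mem (subset_closure (by simp) : y ∈ closure {x * y, y}))

theorem ZMod.two_pow_pred_mul_eq_zero_iff {k : ℕ} (hk : 0 < k) (i : ZMod (2 ^ k)) :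
    2 ^ (k - 1) * i = 0 ↔ ¬IsUnit i := by
  obtain ⟨l, rfl⟩ : ∃ l, k = l + 1 := ⟨k - 1, by omega⟩
  rw [← ZMod.natCast_zmod_val i]
  generalize i.val = v
  rw [ZMod.isUnit_natCast_iff_not_dvd_pow Nat.prime_two hk, not_not, Nat.add_sub_cancel]
  norm_cast
  rw [ZMod.natCast_eq_zero_iff]
  exact Nat.mul_dvd_mul_iff_left (a := 2 ^ l) (by positivity)

theorem ZMod.card_isUnit_two_pow {k : ℕ} (hk : 0 < k) :
    Nat.card {i : ZMod (2 ^ k) // IsUnit i} = 2 ^ (k - 1) := by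
  rw [show Nat.card {i : ZMod (2 ^ k) // IsUnit i} = Nat.card (ZMod (2 ^ k))ˣ from
    (Nat.card_congr (Equiv.ofInjective _ Units.val_injective)).symm, Nat.card_eq_fintype_card,
    ZMod.card_units_eq_totient, Nat.totient_prime_pow Nat.prime_two hk, Nat.add_one_sub_one,
    mul_one]

theorem ZMod.card_two_mul_eq_zero_two_pow {k : ℕ} (hk : 0 < k) :
    Nat.card {j : ZMod (2 ^ k) // 2 * j = 0} = 2 := by
  have := IsAddCyclic.card_nsmulAddMonoidHom_ker (ZMod (2 ^ k)) 2
  rw [Nat.card_zmod, Nat.gcd_eq_right (dvd_pow_self 2 hk.ne')] at this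
  refine (Nat.card_congr (Equiv.subtypeEquivRight fun j ↦ ?_)).trans this
  rw [AddMonoidHom.mem_ker, nsmulAddMonoidHom_apply, two_nsmul, two_mul]

section Metacyclic

variable {G H : Type*} [Group G] [Group H] {a b : G} {r : ℕ}

theorem semiconjBy_pow_of_mul_mul_inv_eq (h : b * a * b⁻¹ = a ^ r) (u : ℕ) :
    SemiconjBy (b ^ u) a (a ^ r ^ u) := by
  induction u with
  | zero => simp
  | succ u ih =>
    have hb : SemiconjBy b (a ^ r ^ u) (a ^ r ^ (u + 1)) := by
      rw [pow_succ', pow_mul, ← h]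
      exact (SemiconjBy.conj_mk b a).pow_right _
    rw [pow_succ']
    exact hb.mul_left ih

theorem pow_mul_pow_mul_pow_mul_pow (h : b * a * b⁻¹ = a ^ r) (i s j t : ℕ) :
    a ^ i * b ^ s * (a ^ j * b ^ t) = a ^ (i + r ^ s * j) * b ^ (s + t) := by
  rw [pow_add, pow_add, pow_mul, mul_assoc, ← mul_assoc (b ^ s),
    ((semiconjBy_pow_of_mul_mul_inv_eq h s).pow_right j).eq]
  simp only [mul_assoc]

variable (a b) in
def powMulPow (M m : ℕ) (p : ZMod M × ZMod m) : G :=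
  a ^ p.1.val * b ^ p.2.val

def metacyclicMul (M m r : ℕ) (p w : ZMod M × ZMod m) : ZMod M × ZMod m :=
  (p.1 + (r : ZMod M) ^ p.2.val * w.1, p.2 + w.2)

variable {M m : ℕ}

theorem powMulPow_natCast (ha : a ^ M = 1) (hb : b ^ m = 1) (i s : ℕ) :
    powMulPow a b M m (i, s) = a ^ i * b ^ s := by
  simp only [powMulPow, ZMod.val_natCast, ← pow_eq_pow_mod _ ha, ← pow_eq_pow_mod _ hb]

theorem powMulPow_zero : powMulPow a b M m 0 = 1 := by
  simp [powMulPow]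

variable [NeZero M] [NeZero m]

theorem powMulPow_mul_powMulPow (ha : a ^ M = 1) (hb : b ^ m = 1) (h : b * a * b⁻¹ = a ^ r)
    (p w : ZMod M × ZMod m) :
    powMulPow a b M m p * powMulPow a b M m w = powMulPow a b M m (metacyclicMul M m r p w) := by
  rw [powMulPow, powMulPow, pow_mul_pow_mul_pow_mul_pow h, ← powMulPow_natCast ha hb]
  simp [metacyclicMul]

theorem powMulPow_surjective (ha : a ^ M = 1) (hb : b ^ m = 1) (h : b * a * b⁻¹ = a ^ r)
    (hgen : closure {a, b} = ⊤) : Function.Surjective (powMulPow a b M m) := by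
  have hfin : ∀ x ∈ ({a, b} : Set G), IsOfFinOrder x := by
    rintro x (rfl | rfl)
    exacts [isOfFinOrder_iff_pow_eq_one.mpr ⟨M, NeZero.pos M, ha⟩,
      isOfFinOrder_iff_pow_eq_one.mpr ⟨m, NeZero.pos m, hb⟩]
  intro g
  have hg : g ∈ Submonoid.closure {a, b} := by
    rw [← closure_toSubmonoid_of_isOfFinOrder hfin, hgen]; trivial
  induction hg using Submonoid.closure_induction with
  | mem x hx =>
    rcases hx with rfl | rfl
    · exact ⟨((1 : ℕ), (0 : ℕ)), by rw [powMulPow_natCast ha hb]; simp⟩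
    · exact ⟨((0 : ℕ), (1 : ℕ)), by rw [powMulPow_natCast ha hb]; simp⟩
  | one => exact ⟨0, powMulPow_zero⟩
  | mul x y _ _ hx hy =>
    obtain ⟨p, rfl⟩ := hx
    obtain ⟨w, rfl⟩ := hy
    exact ⟨metacyclicMul M m r p w, (powMulPow_mul_powMulPow ha hb h p w).symm⟩

theorem exists_eq_pow_or_eq_pow_mul (ha : a ^ M = 1) (hb : b ^ 2 = 1) (h : b * a * b⁻¹ = a ^ r)
    (hgen : closure {a, b} = ⊤) (g : G) : ∃ j : ℕ, g = a ^ j ∨ g = a ^ j * b := by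
  obtain ⟨⟨i, s⟩, rfl⟩ := powMulPow_surjective ha hb h hgen g
  obtain hs | hs : s.val = 0 ∨ s.val = 1 := by have := ZMod.val_lt s; omega
  exacts [⟨i.val, .inl (by simp [powMulPow, hs])⟩, ⟨i.val, .inr (by simp [powMulPow, hs])⟩]

theorem powMulPow_bijective [Finite G] (ha : a ^ M = 1) (hb : b ^ m = 1)
    (h : b * a * b⁻¹ = a ^ r) (hgen : closure {a, b} = ⊤) (hcard : Nat.card G = M * m) :
    Function.Bijective (powMulPow a b M m) :=
  (powMulPow_surjective ha hb h hgen).bijective_of_nat_card_le (by simp [hcard])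

theorem exists_monoidHom_of_bijective (hE : Function.Bijective (powMulPow a b M m))
    (ha : a ^ M = 1) (hb : b ^ m = 1) (h : b * a * b⁻¹ = a ^ r) {x y : H} (hx : x ^ M = 1)
    (hy : y ^ m = 1) (hxy : y * x * y⁻¹ = x ^ r) : ∃ f : G →* H, f a = x ∧ f b = y := by
  let E := Equiv.ofBijective _ hE
  let f : G →* H := MonoidHom.mk' (fun g ↦ powMulPow x y M m (E.symm g)) fun g g' ↦ by
    obtain ⟨p, rfl⟩ := E.surjective g
    obtain ⟨w, rfl⟩ := E.surjective g'
    simp only [E, Equiv.ofBijective_apply, powMulPow_mul_powMulPow ha hb h,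
      powMulPow_mul_powMulPow hx hy hxy, Equiv.ofBijective_symm_apply_apply]
  have hf : ∀ i s : ℕ, f (a ^ i * b ^ s) = x ^ i * y ^ s := fun i s ↦ by
    simp [f, E, ← powMulPow_natCast ha hb, ← powMulPow_natCast hx hy,
      Equiv.ofBijective_symm_apply_apply]
  exact ⟨f, by simpa using hf 1 0, by simpa using hf 0 1⟩

theorem card_mulAut_eq_card_generating_pairs [Finite G] (ha : a ^ M = 1) (hb : b ^ m = 1)
    (h : b * a * b⁻¹ = a ^ r) (hgen : closure {a, b} = ⊤) (hcard : Nat.card G = M * m) :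
    Nat.card (MulAut G) = Nat.card {p : G × G // p.1 ^ M = 1 ∧ p.2 ^ m = 1 ∧
      p.2 * p.1 * p.2⁻¹ = p.1 ^ r ∧ closure {p.1, p.2} = ⊤} := by
  refine Nat.card_congr (Equiv.ofBijective (fun φ ↦ ⟨(φ a, φ b), ?_⟩) ⟨?_, ?_⟩)
  · refine ⟨by rw [← map_pow, ha, map_one], by rw [← map_pow, hb, map_one],
      by rw [← map_inv, ← map_mul, ← map_mul, h, map_pow], ?_⟩
    have himage := MonoidHom.map_closure φ.toMonoidHom {a, b}
    rw [hgen, Set.image_pair, map_top_of_surjective _ φ.surjective] at himage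
    exact himage.symm
  · intro φ ψ hφψ
    simp only [Subtype.mk.injEq, Prod.mk.injEq] at hφψ
    have : φ.toMonoidHom = ψ.toMonoidHom := MonoidHom.eq_of_eqOn_dense hgen (by
      rintro x (rfl | rfl)
      exacts [hφψ.1, hφψ.2])
    exact MulEquiv.ext fun g ↦ DFunLike.congr_fun this g
  · rintro ⟨⟨x, y⟩, hx, hy, hxy, hgen'⟩
    obtain ⟨f, hfa, hfb⟩ := exists_monoidHom_of_bijective
      (powMulPow_bijective ha hb h hgen hcard) ha hb h hx hy hxy
    have hsurj : Function.Surjective f := by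
      rw [← MonoidHom.range_eq_top, eq_top_iff, ← hgen', closure_le]
      rintro g (rfl | rfl)
      exacts [⟨a, hfa⟩, ⟨b, hfb⟩]
    exact ⟨MulEquiv.ofBijective f ⟨Finite.injective_iff_surjective.mpr hsurj, hsurj⟩,
      Subtype.ext (Prod.ext hfa hfb)⟩

end Metacyclic

/-- `p` and `w` are the normal-form coordinates of a pair `(x, y)` with `y ^ 2 = 1`,
`y * x * y⁻¹ = x ^ (1 + 2 ^ (n - 2))` and `¬Commute x y`; the middle term is the coordinate
vector of `x ^ (1 + 2 ^ (n - 2)) = x * (x ^ 2) ^ 2 ^ (n - 3)`. -/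
def IsModularPair (n : ℕ) (p w : ZMod (2 ^ (n - 1)) × ZMod 2) : Prop :=
  let mul := metacyclicMul (2 ^ (n - 1)) 2 (1 + 2 ^ (n - 2))
  mul w w = 0 ∧ mul w p = mul (mul p ((mul p p).1 * 2 ^ (n - 3), 0)) w ∧ mul p w ≠ mul w p

instance (n : ℕ) (p w : ZMod (2 ^ (n - 1)) × ZMod 2) : Decidable (IsModularPair n p w) := by
  unfold IsModularPair; infer_instance

section ModularGroup

variable {G : Type*} [Group G] {n : ℕ} {a b : G}

theorem two_mul_two_pow_sub (hn : 2 ≤ n) : 2 * 2 ^ (n - 2) = 2 ^ (n - 1) := by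
  rw [← pow_succ']; congr 1; omega

theorem two_pow_pred_mul_two (hn : 1 ≤ n) : 2 ^ (n - 1) * 2 = 2 ^ n := by
  rw [← pow_succ]; congr 1; omega

theorem sq_mem_center (hn : 2 ≤ n) (ha : a ^ 2 ^ (n - 1) = 1)
    (hconj : b * a * b⁻¹ = a ^ (1 + 2 ^ (n - 2))) (hgen : closure {a, b} = ⊤) :
    a ^ 2 ∈ center G := by
  have hb : b * a ^ 2 * b⁻¹ = a ^ 2 := by
    rw [← conj_pow, hconj, ← pow_mul, add_mul, one_mul, mul_comm, two_mul_two_pow_sub hn,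
      pow_add, ha, mul_one]
  rw [← centralizer_univ, ← coe_top, ← hgen, centralizer_closure, mem_centralizer_iff]
  rintro x (rfl | rfl)
  · exact (Commute.self_pow x 2).eq
  · exact mul_inv_eq_iff_eq_mul.mp hb

theorem pow_two_pow_pred_eq_one (hn : 3 ≤ n) (ha : a ^ 2 ^ (n - 1) = 1) (hb : b ^ 2 = 1)
    (hconj : b * a * b⁻¹ = a ^ (1 + 2 ^ (n - 2))) (hgen : closure {a, b} = ⊤) (g : G) :
    g ^ 2 ^ (n - 1) = 1 := by
  obtain ⟨k, hk⟩ : ∃ k : ℕ, g ^ 2 = (a ^ 2) ^ k := by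
    obtain ⟨⟨i, s⟩, rfl⟩ := powMulPow_surjective ha hb hconj hgen g
    obtain ⟨l, hl⟩ : Even (1 + (1 + 2 ^ (n - 2)) ^ s.val) :=
      odd_one.add_odd ((Nat.even_pow.mpr ⟨even_two, by omega⟩).one_add.pow)
    refine ⟨i.val * l, ?_⟩
    rw [powMulPow, sq, pow_mul_pow_mul_pow_mul_pow hconj, ← two_mul, pow_mul b, hb, one_pow,
      mul_one, ← pow_mul]
    congr 1
    linear_combination i.val * hl
  rw [← two_mul_two_pow_sub (by omega), pow_mul, hk, ← pow_mul, ← pow_mul,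
    show 2 * (k * 2 ^ (n - 2)) = 2 * 2 ^ (n - 2) * k by ring, pow_mul,
    two_mul_two_pow_sub (by omega), ha, one_pow]

theorem not_commute_generators [Finite G] (hn : 2 ≤ n) (ha : a ^ 2 ^ (n - 1) = 1)
    (hb : b ^ 2 = 1) (hconj : b * a * b⁻¹ = a ^ (1 + 2 ^ (n - 2))) (hgen : closure {a, b} = ⊤)
    (hcard : Nat.card G = 2 ^ n) : ¬Commute a b := by
  intro hab
  have hq : a ^ 2 ^ (n - 2) = 1 := by
    rwa [← hab.eq, mul_inv_cancel_right, pow_add, pow_one, left_eq_mul] at hconj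
  have hE := (powMulPow_bijective ha hb hconj hgen
    (hcard.trans (two_pow_pred_mul_two (by omega)).symm)).injective
  have h0 := @hE ((2 ^ (n - 2) : ℕ), (0 : ℕ)) 0
    (by rw [powMulPow_natCast ha hb, powMulPow_zero, hq, pow_zero, mul_one])
  rw [Prod.ext_iff, Prod.fst_zero, ZMod.natCast_eq_zero_iff] at h0
  exact absurd (Nat.le_of_dvd (by positivity) h0.1)
    (not_le.mpr (Nat.pow_lt_pow_right one_lt_two (by omega)))

theorem closure_pow_pair_eq_top (hn : 3 ≤ n) (ha : a ^ 2 ^ (n - 1) = 1) (hb : b ^ 2 = 1)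
    (hconj : b * a * b⁻¹ = a ^ (1 + 2 ^ (n - 2))) (hgen : closure {a, b} = ⊤) {i : ℕ} {g : G}
    (h : ¬Commute (a ^ i) g) : closure {a ^ i, g} = ⊤ := by
  have hi : Odd i := by
    rw [← Nat.not_even_iff_odd]
    rintro ⟨k, rfl⟩
    rw [← two_mul, pow_mul] at h
    exact h (Commute.pow_left (mem_center_iff.mp (sq_mem_center (by omega) ha hconj hgen) g).symm k)
  have haK : a ∈ closure {a ^ i, g} := by
    obtain ⟨u, hu⟩ := exists_pow_eq_self_of_coprime
      (((Nat.coprime_two_right.mpr hi).pow_right (n - 1)).coprime_dvd_right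
        (orderOf_dvd_of_pow_eq_one ha))
    simpa only [hu] using
      pow_mem (subset_closure (Set.mem_insert _ _) : a ^ i ∈ closure {a ^ i, g}) u
  obtain ⟨j, rfl | rfl⟩ := exists_eq_pow_or_eq_pow_mul ha hb hconj hgen g
  · exact absurd (Commute.pow_pow_self a i j) h
  rw [eq_top_iff, ← hgen, closure_le]
  rintro x (rfl | rfl)
  · exact haK
  · simpa using mul_mem (inv_mem (pow_mem haK j))
      (subset_closure (Set.mem_insert_of_mem _ rfl) : a ^ j * x ∈ closure {a ^ i, a ^ j * x})

theorem closure_pair_eq_top_of_not_commute (hn : 3 ≤ n) (ha : a ^ 2 ^ (n - 1) = 1)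
    (hb : b ^ 2 = 1) (hconj : b * a * b⁻¹ = a ^ (1 + 2 ^ (n - 2))) (hgen : closure {a, b} = ⊤)
    {x y : G} (h : ¬Commute x y) : closure {x, y} = ⊤ := by
  obtain ⟨i, rfl | rfl⟩ := exists_eq_pow_or_eq_pow_mul ha hb hconj hgen x
  · exact closure_pow_pair_eq_top hn ha hb hconj hgen h
  obtain ⟨j, rfl | rfl⟩ := exists_eq_pow_or_eq_pow_mul ha hb hconj hgen y
  · rw [Set.pair_comm]
    exact closure_pow_pair_eq_top hn ha hb hconj hgen fun hc ↦ h hc.symm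
  -- Neither lies in `⟨a⟩`, but `x * y` does, and `{x * y, y}` generates the same subgroup.
  have hxy : a ^ i * b * (a ^ j * b) = a ^ (i + (1 + 2 ^ (n - 2)) * j) := by
    simpa [hb] using pow_mul_pow_mul_pow_mul_pow hconj i 1 j 1
  rw [← closure_mul_pair_eq, hxy]
  refine closure_pow_pair_eq_top hn ha hb hconj hgen fun hc ↦ h ?_
  rw [← hxy] at hc
  exact ((IsRightRegular.all _).commute_mul_right_iff.mp hc).symm

theorem closure_pair_eq_top_iff_not_commute [Finite G] (hn : 3 ≤ n) (ha : a ^ 2 ^ (n - 1) = 1)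
    (hb : b ^ 2 = 1) (hconj : b * a * b⁻¹ = a ^ (1 + 2 ^ (n - 2))) (hgen : closure {a, b} = ⊤)
    (hcard : Nat.card G = 2 ^ n) (x y : G) : closure {x, y} = ⊤ ↔ ¬Commute x y := by
  refine ⟨fun htop hxy ↦ not_commute_generators (by omega) ha hb hconj hgen hcard ?_,
    closure_pair_eq_top_of_not_commute hn ha hb hconj hgen⟩
  have hcomm : ∀ u ∈ ({x, y} : Set G), ∀ v ∈ ({x, y} : Set G), u * v = v * u := by
    rintro u (rfl | rfl) v (rfl | rfl)
    exacts [rfl, hxy.eq, hxy.eq.symm, rfl]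
  have hle := closure_le_centralizer_centralizer ({x, y} : Set G)
  rw [htop] at hle
  exact Set.centralizer_centralizer_comm_of_comm hcomm a (hle (mem_top a)) b (hle (mem_top b))

theorem card_mulAut_eq_card_noncommuting_pairs [Finite G] (hn : 3 ≤ n)
    (ha : a ^ 2 ^ (n - 1) = 1) (hb : b ^ 2 = 1) (hconj : b * a * b⁻¹ = a ^ (1 + 2 ^ (n - 2)))
    (hgen : closure {a, b} = ⊤) (hcard : Nat.card G = 2 ^ n) :
    Nat.card (MulAut G) = Nat.card {p : G × G // p.2 ^ 2 = 1 ∧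
      p.2 * p.1 * p.2⁻¹ = p.1 ^ (1 + 2 ^ (n - 2)) ∧ ¬Commute p.1 p.2} := by
  rw [card_mulAut_eq_card_generating_pairs ha hb hconj hgen
    (hcard.trans (two_pow_pred_mul_two (by omega)).symm)]
  exact Nat.card_congr <| Equiv.subtypeEquivRight fun p ↦ by
    simp only [pow_two_pow_pred_eq_one hn ha hb hconj hgen,
      closure_pair_eq_top_iff_not_commute hn ha hb hconj hgen hcard, true_and]

theorem card_noncommuting_pairs_eq_card_isModularPair [Finite G] (hn : 3 ≤ n)
    (ha : a ^ 2 ^ (n - 1) = 1) (hb : b ^ 2 = 1)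
    (hconj : b * a * b⁻¹ = a ^ (1 + 2 ^ (n - 2))) (hgen : closure {a, b} = ⊤)
    (hcard : Nat.card G = 2 ^ n) :
    Nat.card {p : G × G // p.2 ^ 2 = 1 ∧ p.2 * p.1 * p.2⁻¹ = p.1 ^ (1 + 2 ^ (n - 2)) ∧
      ¬Commute p.1 p.2} =
    Nat.card {pw : (ZMod (2 ^ (n - 1)) × ZMod 2) × (ZMod (2 ^ (n - 1)) × ZMod 2) //
      IsModularPair n pw.1 pw.2} := by
  have hE := powMulPow_bijective ha hb hconj hgen
    (hcard.trans (two_pow_pred_mul_two (by omega)).symm)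
  have hmul := powMulPow_mul_powMulPow ha hb hconj
  set E := powMulPow a b (2 ^ (n - 1)) 2
  set mul := metacyclicMul (2 ^ (n - 1)) 2 (1 + 2 ^ (n - 2))
  have hpow (p) : E p ^ (1 + 2 ^ (n - 2)) = E (mul p ((mul p p).1 * 2 ^ (n - 3), 0)) := by
    have hsq : E p ^ 2 = E ((mul p p).1, 0) := by
      rw [sq, hmul]
      refine congrArg E (Prod.ext rfl ?_)
      show p.2 + p.2 = 0
      generalize p.2 = s; revert s; decide
    have hpowh (k : ZMod (2 ^ (n - 1))) : E (k, 0) ^ 2 ^ (n - 3) = E (k * 2 ^ (n - 3), 0) := by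
      have := powMulPow_natCast (m := 2) (b := b) ha hb (k.val * 2 ^ (n - 3)) 0
      push_cast [ZMod.natCast_zmod_val] at this
      rw [show E (k * 2 ^ (n - 3), 0) = _ from this, pow_zero, mul_one, pow_mul]
      simp [E, powMulPow]
    rw [pow_add, pow_one, show 2 ^ (n - 2) = 2 * 2 ^ (n - 3) by rw [← pow_succ']; congr 1; omega,
      pow_mul, hsq, hpowh, hmul]
  have hone : (1 : G) = E 0 := powMulPow_zero.symm
  refine (Nat.card_congr <| ((Equiv.ofBijective E hE).prodCongr
    (Equiv.ofBijective E hE)).subtypeEquiv fun pw ↦ ?_).symm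
  simp only [IsModularPair, Equiv.prodCongr_apply, Prod.map, Equiv.ofBijective_apply, sq, hmul,
    mul_inv_eq_iff_eq_mul, hpow, commute_iff_eq, hone, hE.injective.eq_iff]
  exact Iff.rfl

end ModularGroup

theorem card_isModularPair_three :
    Nat.card {pw : (ZMod (2 ^ (3 - 1)) × ZMod 2) × (ZMod (2 ^ (3 - 1)) × ZMod 2) //
      IsModularPair 3 pw.1 pw.2} = 2 ^ 3 := by
  rw [Nat.card_eq_fintype_card]
  decide

theorem isModularPair_iff {n : ℕ} (hn : 4 ≤ n) (i j : ZMod (2 ^ (n - 1))) (s t : ZMod 2) :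
    IsModularPair n (i, s) (j, t) ↔ IsUnit i ∧ 2 * j = 0 ∧ t = 1 := by
  rw [← not_not (a := IsUnit i), ← ZMod.two_pow_pred_mul_eq_zero_iff (by omega),
    show n - 1 - 1 = n - 2 by omega]
  have h2h : 2 * (2 : ZMod (2 ^ (n - 1))) ^ (n - 3) = 2 ^ (n - 2) := by
    rw [← pow_succ']; congr 1; omega
  have hq2 : 2 * (2 : ZMod (2 ^ (n - 1))) ^ (n - 2) = 0 := by
    rw [← pow_succ', show n - 2 + 1 = n - 1 by omega]; exact_mod_cast ZMod.natCast_self _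
  have hqh : (2 : ZMod (2 ^ (n - 1))) ^ (n - 2) * 2 ^ (n - 3) = 0 := by
    rw [← pow_add, show n - 2 + (n - 3) = (n - 1) + (n - 4) by omega, pow_add]
    norm_cast; rw [Nat.cast_mul, ZMod.natCast_self, zero_mul]
  have h11 : (1 : ZMod 2) + 1 = 0 := rfl
  -- With `q = 2 ^ (n - 2)` and `h = 2 ^ (n - 3)`, each case is ring arithmetic modulo
  -- `2 * q = 0`, `2 * h = q` and `q * h = 0`; the last relation is where `4 ≤ n` is needed.
  unfold IsModularPair metacyclicMul
  obtain rfl | rfl : s = 0 ∨ s = 1 := by revert s; decide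
  all_goals obtain rfl | rfl : t = 0 ∨ t = 1 := by revert t; decide
  all_goals simp only [Nat.cast_add, Nat.cast_one, Nat.cast_pow, Nat.cast_ofNat, ZMod.val_zero,
    ZMod.val_one, pow_zero, pow_one, one_mul, add_zero, zero_add, h11, Prod.ext_iff,
    Prod.fst_zero, Prod.snd_zero, and_true, ne_eq, zero_ne_one, and_false, iff_false, not_and,
    Decidable.not_not]
  all_goals generalize (2 : ZMod (2 ^ (n - 1))) ^ (n - 3) = h at *
  all_goals generalize (2 : ZMod (2 ^ (n - 1))) ^ (n - 2) = q at *
  all_goals grind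

theorem card_isModularPair {n : ℕ} (hn : 4 ≤ n) :
    Nat.card {pw : (ZMod (2 ^ (n - 1)) × ZMod 2) × (ZMod (2 ^ (n - 1)) × ZMod 2) //
      IsModularPair n pw.1 pw.2} = 2 ^ n := by
  let e : {pw : (ZMod (2 ^ (n - 1)) × ZMod 2) × (ZMod (2 ^ (n - 1)) × ZMod 2) //
      IsUnit pw.1.1 ∧ 2 * pw.2.1 = 0 ∧ pw.2.2 = 1} ≃
      {i : ZMod (2 ^ (n - 1)) // IsUnit i} × ZMod 2 × {j : ZMod (2 ^ (n - 1)) // 2 * j = 0} :=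
    { toFun := fun pw ↦ (⟨pw.1.1.1, pw.2.1⟩, pw.1.1.2, ⟨pw.1.2.1, pw.2.2.1⟩)
      invFun := fun x ↦ ⟨((x.1, x.2.1), (x.2.2, 1)), x.1.2, x.2.2.2, rfl⟩
      left_inv := fun pw ↦ Subtype.ext (Prod.ext rfl (Prod.ext rfl pw.2.2.2.symm))
      right_inv := fun _ ↦ rfl }
  rw [Nat.card_congr (Equiv.subtypeEquivRight fun pw ↦ isModularPair_iff hn _ _ _ _),
    Nat.card_congr e, Nat.card_prod, Nat.card_prod, ZMod.card_isUnit_two_pow (by omega),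
    Nat.card_zmod, ZMod.card_two_mul_eq_zero_two_pow (by omega), ← sq, ← pow_add]
  congr 1; omega

/-- For `n ≥ 3`, the modular group of order `2 ^ n`, presented as
`⟨a, b : a^(2^(n-1)) = b^2 = 1, a^b = a^(1 + 2^(n-2))⟩`, has automorphism group of
order `2 ^ n = |G|`. -/
theorem card_aut_modular_two_group (n : ℕ) (hn : 3 ≤ n) (G : Type*) [Group G] [Finite G]
    (a b : G) (ha : a ^ 2 ^ (n - 1) = 1) (hb : b ^ 2 = 1)
    (hconj : b * a * b⁻¹ = a ^ (1 + 2 ^ (n - 2)))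
    (hgen : Subgroup.closure {a, b} = ⊤) (hcard : Nat.card G = 2 ^ n) :
    Nat.card (MulAut G) = 2 ^ n := by
  rw [card_mulAut_eq_card_noncommuting_pairs hn ha hb hconj hgen hcard,
    card_noncommuting_pairs_eq_card_isModularPair hn ha hb hconj hgen hcard]
  obtain rfl | hn4 := (show n = 3 ∨ 4 ≤ n by omega)
  · exact card_isModularPair_three
  · exact card_isModularPair hn4
end
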